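/- Integral formula for the commutator with a function of a self-adjoint operator: Let H be a complex Hilbert space, let A, B be bounded linear operators on H with A self-adjoint, and let g : ℝ → ℂ be integrable with ∫_ℝ |g(s)|(1+|s|) ds < ∞. Then, with T := ∫_ℝ g(s) e^{isA} ds (a Bochner integral of bounded operators), one has B∘T − T∘B = i · ∫_ℝ g(s) · e^{isA} ∘ ( ∫₀^s e^{−iuA} ∘ (BA − AB) ∘ e^{iuA} du ) ds. -/

import Mathlib

/-!
Differentiating `u ↦ e^{-iuA} B e^{iuA}` and integrating from `0` to `s` gives
`[B, e^{isA}] = i e^{isA} ∫₀^s e^{-iuA} [B, A] e^{iuA} du`; integrating this against `g` gives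
the formula whenever `s ↦ g(s) e^{isA}` is Bochner integrable.

Otherwise both sides are `0` by convention, since `g` need not be measurable. Up to the factor `i`
the right-hand integrand is `g(s) [B, e^{isA}]`, and unless `[B, A] = 0` the commutator vanishes
only on a closed proper subgroup of `ℝ`, a null set. Off that set `g` can be recovered measurably
from `g(s) [B, e^{isA}]`, so integrability of the right-hand integrand would make `g` measurable,
and then `‖g(s) e^{isA}‖ ≤ ‖g(s)‖` would make the left-hand one integrable too.
-/

noncomputable section

open MeasureTheory

/-- `e^{isA}`, the exponential of the bounded operator `isA`. -/
def expUnit {H : Type*} [NormedAddCommGroup H] [InnerProductSpace ℂ H] [CompleteSpace H]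
    (A : H →L[ℂ] H) (s : ℝ) : H →L[ℂ] H :=
  NormedSpace.exp (((s : ℂ) * Complex.I) • A)

theorem AddSubgroup.volume_eq_zero_of_isClosed_of_ne_top {S : AddSubgroup ℝ}
    (hS : IsClosed (S : Set ℝ)) (hne : S ≠ ⊤) : volume (S : Set ℝ) = 0 := by
  rcases S.dense_or_cyclic with hdense | ⟨a, rfl⟩
  · refine absurd ?_ hne
    rw [← SetLike.coe_set_eq, AddSubgroup.coe_top, ← hS.closure_eq, hdense.closure_eq]
  · rw [← AddSubgroup.zmultiples_eq_closure, AddSubgroup.coe_zmultiples]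
    exact (Set.countable_range _).measure_zero _

section SmulMeasurability

variable {α 𝕜 : Type*} [RCLike 𝕜] [MeasurableSpace α] [TopologicalSpace α]
  [OpensMeasurableSpace α] [SecondCountableTopology α] {μ : Measure α} {c : α → 𝕜}

theorem aemeasurable_restrict_of_aestronglyMeasurable_smul {F : Type*} [NormedAddCommGroup F]
    [InnerProductSpace 𝕜 F] {f : α → F} (hf : Continuous f)
    (hcf : AEStronglyMeasurable (fun x => c x • f x) μ) :
    AEMeasurable c (μ.restrict {x | f x ≠ 0}) := by
  have hquot : AEMeasurable (fun x => inner 𝕜 (f x) (c x • f x) / (‖f x‖ : 𝕜) ^ 2) μ :=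
    (hf.aestronglyMeasurable.inner hcf).aemeasurable.div
      ((RCLike.continuous_ofReal.comp hf.norm).pow 2).aemeasurable
  refine hquot.restrict.congr <|
    ae_restrict_of_forall_mem (isOpen_ne_fun hf continuous_const).measurableSet fun x hx => ?_
  have hx : (‖f x‖ : 𝕜) ^ 2 ≠ 0 := by simpa using hx
  dsimp only
  rw [inner_smul_right, inner_self_eq_norm_sq_to_K, mul_div_cancel_right₀ _ hx]

theorem aemeasurable_of_aestronglyMeasurable_smul {E F : Type*} [NormedAddCommGroup E]
    [NormedSpace 𝕜 E] [NormedAddCommGroup F] [InnerProductSpace 𝕜 F]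
    {M : α → E →L[𝕜] F} (hM : Continuous M)
    (hcM : AEStronglyMeasurable (fun x => c x • M x) μ) (hM0 : μ {x | M x = 0} = 0) :
    AEMeasurable c μ := by
  have hMv (v : E) : Continuous fun x => M x v := hM.clm_apply continuous_const
  obtain ⟨T, hT, hTU⟩ := TopologicalSpace.isOpen_iUnion_countable
    (fun v : E => {x | M x v ≠ 0}) fun v => isOpen_ne_fun (hMv v) continuous_const
  have hcover : ⋃ v : T, {x | M x v ≠ 0} = {x | M x = 0}ᶜ := by
    rw [← Set.biUnion_eq_iUnion T fun v _ => {x | M x v ≠ 0}, hTU]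
    ext x
    simp [ContinuousLinearMap.ext_iff]
  have := hT.to_subtype
  have hc : AEMeasurable c (μ.restrict {x | M x = 0}ᶜ) :=
    hcover ▸ aemeasurable_iUnion_iff.mpr fun v =>
      aemeasurable_restrict_of_aestronglyMeasurable_smul (hMv v)
        (hcM.apply_continuousLinearMap (v : E))
  rwa [Measure.restrict_eq_self_of_ae_mem (s := {x | M x = 0}ᶜ) (compl_mem_ae_iff.mpr hM0)]
    at hc

end SmulMeasurability

section expUnit

variable {H : Type*} [NormedAddCommGroup H] [InnerProductSpace ℂ H] [CompleteSpace H]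
  (A B : H →L[ℂ] H)

theorem expUnit_eq_exp_smul (s : ℝ) :
    expUnit A s = NormedSpace.exp (s • (Complex.I • A)) := by
  rw [expUnit, ← smul_assoc, Complex.real_smul]

theorem hasDerivAt_expUnit (s : ℝ) :
    HasDerivAt (expUnit A) (expUnit A s * (Complex.I • A)) s := by
  simp only [funext (expUnit_eq_exp_smul A)]
  exact hasDerivAt_exp_smul_const _ s

theorem hasDerivAt_expUnit' (s : ℝ) :
    HasDerivAt (expUnit A) ((Complex.I • A) * expUnit A s) s := by
  simp only [funext (expUnit_eq_exp_smul A)]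
  exact hasDerivAt_exp_smul_const' _ s

@[fun_prop]
theorem continuous_expUnit : Continuous (expUnit A) :=
  continuous_iff_continuousAt.mpr fun s => (hasDerivAt_expUnit A s).continuousAt

@[simp]
theorem expUnit_zero : expUnit A 0 = 1 := by
  simp [expUnit]

theorem expUnit_add (s t : ℝ) : expUnit A (s + t) = expUnit A s * expUnit A t := by
  let +nondep : NormedAlgebra ℚ (H →L[ℂ] H) := .restrictScalars ℚ ℂ _
  simp only [expUnit_eq_exp_smul, add_smul]
  exact NormedSpace.exp_add_of_commute (((Commute.refl _).smul_left _).smul_right _)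

theorem expUnit_neg_mul (s : ℝ) : expUnit A (-s) * expUnit A s = 1 := by
  rw [← expUnit_add, neg_add_cancel, expUnit_zero]

theorem expUnit_mul_neg (s : ℝ) : expUnit A s * expUnit A (-s) = 1 := by
  rw [← expUnit_add, add_neg_cancel, expUnit_zero]

theorem star_expUnit {A : H →L[ℂ] H} (hA : IsSelfAdjoint A) (s : ℝ) :
    star (expUnit A s) = expUnit A (-s) := by
  rw [expUnit, expUnit, NormedSpace.star_exp, star_smul, hA.star_eq]
  congr 2
  simp

theorem norm_expUnit_le_one {A : H →L[ℂ] H} (hA : IsSelfAdjoint A) (s : ℝ) :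
    ‖expUnit A s‖ ≤ 1 := by
  have h : ‖expUnit A s‖ * ‖expUnit A s‖ ≤ 1 := by
    rw [← CStarRing.norm_star_mul_self, star_expUnit hA, expUnit_neg_mul]
    exact ContinuousLinearMap.norm_id_le
  nlinarith [norm_nonneg (expUnit A s)]

theorem hasDerivAt_conj_expUnit (t : ℝ) :
    HasDerivAt (fun t => expUnit A (-t) * B * expUnit A t)
      (Complex.I • (expUnit A (-t) * (B * A - A * B) * expUnit A t)) t := by
  have hneg : HasDerivAt (fun t => expUnit A (-t)) (-(expUnit A (-t) * (Complex.I • A))) t :=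
    ((hasDerivAt_expUnit A (-t)).scomp t (hasDerivAt_neg t)).congr_deriv (neg_one_smul ℝ _)
  refine ((hneg.mul_const B).mul (hasDerivAt_expUnit' A t)).congr_deriv ?_
  simp only [mul_sub, sub_mul, smul_sub, neg_mul, mul_smul_comm, smul_mul_assoc, mul_assoc]
  abel

theorem commutator_expUnit_eq_integral (s : ℝ) :
    B * expUnit A s - expUnit A s * B =
      Complex.I • (expUnit A s *
        ∫ u in (0 : ℝ)..s, expUnit A (-u) * (B * A - A * B) * expUnit A u) := by
  have hcont : Continuous fun u => Complex.I • (expUnit A (-u) * (B * A - A * B) * expUnit A u) :=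
    by fun_prop
  have hFTC := intervalIntegral.integral_eq_sub_of_hasDerivAt
    (fun t _ => hasDerivAt_conj_expUnit A B t) (hcont.intervalIntegrable 0 s)
  rw [intervalIntegral.integral_smul] at hFTC
  rw [← mul_smul_comm, hFTC, neg_zero, expUnit_zero, one_mul, mul_one, mul_sub, ← mul_assoc,
    ← mul_assoc, expUnit_mul_neg, one_mul]

def expUnitCommutant : AddSubgroup ℝ where
  carrier := {s | Commute B (expUnit A s)}
  zero_mem' := by simp
  add_mem' {a b} ha hb := by
    simp only [Set.mem_ofPred_eq, expUnit_add] at *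
    exact ha.mul_right hb
  neg_mem' {a} ha :=
    Commute.units_inv_right (u := ⟨_, _, expUnit_mul_neg A a, expUnit_neg_mul A a⟩) ha

theorem commute_of_forall_commute_expUnit (h : ∀ s, Commute B (expUnit A s)) : Commute B A := by
  have hderiv := ((hasDerivAt_expUnit' A 0).const_mul B).unique <| by
    simpa only [(h _).eq] using (hasDerivAt_expUnit A 0).mul_const B
  simp only [expUnit_zero, mul_one, one_mul, mul_smul_comm, smul_mul_assoc] at hderiv
  exact smul_right_injective _ Complex.I_ne_zero hderiv

theorem volume_setOf_commute_expUnit_eq_zero (hBA : ¬Commute B A) :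
    volume {s | Commute B (expUnit A s)} = 0 := by
  refine AddSubgroup.volume_eq_zero_of_isClosed_of_ne_top (S := expUnitCommutant A B)
    (isClosed_eq (by fun_prop) (by fun_prop)) fun htop => hBA ?_
  exact commute_of_forall_commute_expUnit A B fun s =>
    (AddSubgroup.eq_top_iff' _).mp htop s

theorem aemeasurable_of_aestronglyMeasurable_smul_commutator_expUnit (hBA : ¬Commute B A)
    {g : ℝ → ℂ}
    (hg : AEStronglyMeasurable (fun s => g s • (B * expUnit A s - expUnit A s * B))) :
    AEMeasurable g := by
  refine aemeasurable_of_aestronglyMeasurable_smul (by fun_prop) hg ?_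
  simp only [sub_eq_zero]
  exact volume_setOf_commute_expUnit_eq_zero A B hBA

theorem integrable_smul_expUnit {A : H →L[ℂ] H} (hA : IsSelfAdjoint A) {g : ℝ → ℂ}
    (hg : Integrable g) : Integrable fun s => g s • expUnit A s := by
  refine hg.norm.mono' (hg.1.smul (continuous_expUnit A).aestronglyMeasurable)
    (ae_of_all _ fun s => ?_)
  rw [norm_smul]
  exact mul_le_of_le_one_right (norm_nonneg _) (norm_expUnit_le_one hA s)

end expUnit

/-- Integral formula for the commutator with a function of a self-adjoint operator:
`B∘T − T∘B = i·∫ g(s)·e^{isA}∘(∫₀^s e^{−iuA}∘(BA − AB)∘e^{iuA} du) ds`,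
where `T = ∫ g(s)e^{isA} ds`. -/
theorem commutator_integral_formula
    {H : Type*} [NormedAddCommGroup H] [InnerProductSpace ℂ H] [CompleteSpace H]
    (A B : H →L[ℂ] H) (hA : IsSelfAdjoint A)
    (g : ℝ → ℂ) (hg : Integrable fun s : ℝ => ‖g s‖ * (1 + |s|)) :
    B * (∫ s : ℝ, g s • expUnit A s) - (∫ s : ℝ, g s • expUnit A s) * B =
      Complex.I • ∫ s : ℝ, g s •
        (expUnit A s * ∫ u in (0 : ℝ)..s, expUnit A (-u) * (B * A - A * B) * expUnit A u) := by
  by_cases hf : Integrable fun s => g s • expUnit A s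
  · rw [← integral_const_mul_of_integrable hf, ← integral_mul_const_of_integrable hf,
      ← integral_sub (hf.const_mul B) (hf.mul_const B), ← integral_smul]
    refine integral_congr_ae (ae_of_all _ fun s => ?_)
    simp only [mul_smul_comm, smul_mul_assoc, ← smul_sub, commutator_expUnit_eq_integral,
      smul_comm (g s)]
  rw [integral_undef hf, mul_zero, zero_mul, sub_zero]
  by_cases hBA : Commute B A
  · simp [hBA.eq]
  rw [integral_undef fun hF => hf ?_, smul_zero]
  have hgm : AEMeasurable g := by
    refine aemeasurable_of_aestronglyMeasurable_smul_commutator_expUnit A B hBA <|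
      (hF.1.const_smul Complex.I).congr (ae_of_all _ fun s => ?_)
    simp only [Pi.smul_apply, commutator_expUnit_eq_integral, smul_comm (g s)]
  refine integrable_smul_expUnit hA <|
    hg.mono' hgm.aestronglyMeasurable (ae_of_all _ fun s => ?_)
  exact le_mul_of_one_le_right (norm_nonneg _) (by linarith [abs_nonneg s])
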